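/- arXiv:1912.12372 — 4 statements merged into one kernel-verified Lean document; each statement's English description precedes it below -/
import Mathlib

section
/- Let v ∈ ℝ^d with v = Σ_{i=1}^{m+n} α_i v_i, where {v_1,...,v_m} is linearly independent and α_i ≠ 0 for i = m+1,...,m+n. Then there exist a subset I ⊆ {m+1,...,m+n} and scalars ᾱ_i for i ∈ {1,...,m} ∪ I such that v = Σ_{i ∈ {1,...,m} ∪ I} ᾱ_i v_i, α_i ᾱ_i > 0 for every i ∈ I, and {v_i}_{i ∈ {1,...,m} ∪ I} is linearly independent. -/
/-!
Carathéodory's reduction, keeping the independent core `F` fixed. While the vectors indexed by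
`F ∪ I` are dependent, some relation `γ` among them is nonzero on `I`, because `F` is
independent. Subtracting `t • γ`, where `t = β j / γ j` has the least modulus over `j ∈ I` with `γ j ≠ 0`,
annihilates the coefficient of `j` and changes no other coefficient on `I` by more than its
modulus, so no sign on `I` flips. Strong induction on `I` ends at an independent family.
-/

open Finset

lemma pos_mul_sub_of_abs_mul_le {𝕜 : Type*} [Field 𝕜] [LinearOrder 𝕜] [IsStrictOrderedRing 𝕜]
    {a b c t : 𝕜} (hab : 0 < a * b) (hle : |t * c| ≤ |b|) (hne : b - t * c ≠ 0) :
    0 < a * (b - t * c) := by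
  have hsame : 0 ≤ b * (b - t * c) := by
    nlinarith [abs_mul_abs_self b, le_abs_self (b * (t * c)), abs_mul b (t * c),
      mul_le_mul_of_nonneg_left hle (abs_nonneg b)]
  have hb : 0 < b * b := mul_self_pos.mpr (right_ne_zero_of_mul hab.ne')
  have hprod : 0 < a * (b - t * c) * (b * b) := by
    nlinarith [mul_pos hab hb, mul_self_pos.mpr hne]
  exact pos_of_mul_pos_left hprod hb.le

lemma exists_relation_ne_zero_of_not_linearIndepOn_union {R M ι : Type*} [Ring R]
    [AddCommGroup M] [Module R M] [DecidableEq ι] {V : ι → M} {F I : Finset ι}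
    (hF : LinearIndepOn R V (F : Set ι))
    (hdep : ¬ LinearIndepOn R V ((F ∪ I : Finset ι) : Set ι)) :
    ∃ γ : ι → R, ∑ i ∈ F ∪ I, γ i • V i = 0 ∧ ∃ j ∈ I, γ j ≠ 0 := by
  obtain ⟨γ, hγ, i, hi, hγi⟩ := not_linearIndepOn_finset_iff.mp hdep
  refine ⟨γ, hγ, ?_⟩
  by_contra! hI
  have hFsum : ∑ i ∈ F, γ i • V i = 0 := by
    rw [← hγ]
    refine sum_subset subset_union_left fun j hj hjF => ?_
    rw [hI j ((mem_union.mp hj).resolve_left hjF), zero_smul]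
  rcases mem_union.mp hi with hiF | hiI
  · exact hγi (linearIndepOn_finset_iff.mp hF γ hFsum i hiF)
  · exact hγi (hI i hiI)

section SignedRepresentation

variable {𝕜 M ι : Type*} [Field 𝕜] [LinearOrder 𝕜] [IsStrictOrderedRing 𝕜]
  [AddCommGroup M] [Module 𝕜 M] [DecidableEq ι] {V : ι → M} {α : ι → 𝕜} {v : M}
  {F : Finset ι}

lemma exists_ssubset_signed_repr_of_relation {I : Finset ι} {β γ : ι → 𝕜}
    (hv : v = ∑ i ∈ F ∪ I, β i • V i) (hβ : ∀ i ∈ I, 0 < α i * β i)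
    (hγ : ∑ i ∈ F ∪ I, γ i • V i = 0) {j : ι} (hj : j ∈ I) (hγj : γ j ≠ 0) :
    ∃ I' ⊂ I, ∃ β' : ι → 𝕜, v = ∑ i ∈ F ∪ I', β' i • V i ∧ ∀ i ∈ I', 0 < α i * β' i := by
  obtain ⟨j₀, hj₀S, hmin⟩ := (I.filter (γ · ≠ 0)).exists_min_image (fun i => |β i / γ i|)
    ⟨j, mem_filter.mpr ⟨hj, hγj⟩⟩
  obtain ⟨hj₀, hγj₀⟩ := mem_filter.mp hj₀S
  set t := β j₀ / γ j₀
  set β' : ι → 𝕜 := fun i => β i - t * γ i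
  have hv' : v = ∑ i ∈ F ∪ I, β' i • V i := by
    simp only [β', sub_smul, mul_smul, sum_sub_distrib, ← smul_sum, hγ, smul_zero, sub_zero, hv]
  have hβ'j₀ : β' j₀ = 0 := by simp [β', t, div_mul_cancel₀ _ hγj₀]
  have hshrink : ∀ i ∈ I, |t * γ i| ≤ |β i| := by
    intro i hi
    by_cases hγi : γ i = 0
    · simp [hγi]
    calc |t * γ i| = |t| * |γ i| := abs_mul _ _
      _ ≤ |β i / γ i| * |γ i| := mul_le_mul_of_nonneg_right (hmin i (mem_filter.mpr ⟨hi, hγi⟩)) (abs_nonneg _)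
      _ = |β i| := by rw [abs_div, div_mul_cancel₀ _ (abs_ne_zero.mpr hγi)]
  refine ⟨I.filter (β' · ≠ 0), filter_ssubset.mpr ⟨j₀, hj₀, by simp [hβ'j₀]⟩, β', ?_, ?_⟩
  · rw [hv']
    refine (sum_subset (union_subset_union_right (filter_subset _ _)) fun i hi hi' => ?_).symm
    have hiI : i ∈ I := (mem_union.mp hi).resolve_left fun hiF => hi' (mem_union_left _ hiF)
    have hβ'i : β' i = 0 := by
      by_contra hne
      exact hi' (mem_union_right _ (mem_filter.mpr ⟨hiI, hne⟩))
    rw [hβ'i, zero_smul]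
  · intro i hi
    obtain ⟨hiI, hβ'i⟩ := mem_filter.mp hi
    exact pos_mul_sub_of_abs_mul_le (hβ i hiI) (hshrink i hiI) hβ'i

theorem exists_linearIndepOn_signed_repr (hF : LinearIndepOn 𝕜 V (F : Set ι)) (I : Finset ι)
    (β : ι → 𝕜) (hv : v = ∑ i ∈ F ∪ I, β i • V i) (hβ : ∀ i ∈ I, 0 < α i * β i) :
    ∃ I' ⊆ I, ∃ β' : ι → 𝕜, v = ∑ i ∈ F ∪ I', β' i • V i ∧ (∀ i ∈ I', 0 < α i * β' i) ∧
      LinearIndepOn 𝕜 V ((F ∪ I' : Finset ι) : Set ι) := by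
  induction I using Finset.strongInduction generalizing β with
  | H I ih =>
    by_cases hind : LinearIndepOn 𝕜 V ((F ∪ I : Finset ι) : Set ι)
    · exact ⟨I, subset_rfl, β, hv, hβ, hind⟩
    obtain ⟨γ, hγ, j, hj, hγj⟩ := exists_relation_ne_zero_of_not_linearIndepOn_union hF hind
    obtain ⟨I', hI', β', hv', hβ'⟩ := exists_ssubset_signed_repr_of_relation hv hβ hγ hj hγj
    obtain ⟨I'', hI'', rest⟩ := ih I' hI' β' hv' hβ'
    exact ⟨I'', hI''.trans hI'.subset, rest⟩

end SignedRepresentation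

/-- Extension of Carathéodory's lemma (Lemma 1 of Andreani–Haeser–Schuverdt–Silva):
if `v = ∑_{i=1}^{m+n} α_i v_i` with `{v_1,…,v_m}` linearly independent and `α_i ≠ 0` for
`i = m+1,…,m+n`, then there is a subset `I` of the last `n` indices and scalars `β_i`
for `i ∈ {1,…,m} ∪ I` with `v = ∑ β_i v_i`, `α_i β_i > 0` on `I`, and the corresponding
vectors linearly independent. -/
theorem stmt0 {d m n : ℕ} (V : Fin (m + n) → (Fin d → ℝ)) (α : Fin (m + n) → ℝ)
    (v : Fin d → ℝ)
    (hv : v = ∑ i, α i • V i)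
    (hli : LinearIndependent ℝ (fun i : Fin m => V (Fin.castAdd n i)))
    (hα : ∀ i : Fin (m + n), m ≤ (i : ℕ) → α i ≠ 0) :
    ∃ I : Finset (Fin (m + n)), (∀ i ∈ I, m ≤ (i : ℕ)) ∧
      ∃ β : Fin (m + n) → ℝ,
        v = ∑ i ∈ (Finset.univ.filter fun i : Fin (m + n) => (i : ℕ) < m) ∪ I,
              β i • V i ∧
        (∀ i ∈ I, α i * β i > 0) ∧
        LinearIndependent ℝ
          (fun i : ((Finset.univ.filter fun i : Fin (m + n) => (i : ℕ) < m) ∪ I :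
              Finset (Fin (m + n))) => V i) := by
  set F := univ.filter fun i : Fin (m + n) => (i : ℕ) < m
  have hF : LinearIndepOn ℝ V (F : Set (Fin (m + n))) := by
    have hrange : (F : Set (Fin (m + n))) = Set.range (Fin.castAdd n) := by
      ext i
      simpa [F] using ⟨fun h => ⟨⟨i, h⟩, rfl⟩, fun ⟨j, hj⟩ => hj ▸ j.2⟩
    rwa [hrange, linearIndepOn_range_iff (Fin.castAdd_injective m n)]
  have hvF : v = ∑ i ∈ F ∪ univ.filter fun i => m ≤ (i : ℕ), α i • V i := by
    rw [hv]
    congr 1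
    ext i
    simpa [F] using lt_or_ge (i : ℕ) m
  obtain ⟨I, hI, β, hvβ, hαβ, hind⟩ := exists_linearIndepOn_signed_repr hF _ α hvF
    fun i hi => mul_self_pos.mpr (hα i (mem_filter.mp hi).2)
  exact ⟨I, fun i hi => (mem_filter.mp (hI hi)).2, β, hvβ, hαβ, hind⟩
end

section
/- For any (a,b) ∈ ℝ², the distance from (a,b) to the set Ω := {(y,z) ∈ ℝ² : y ≥ 0, z ≥ 0, y·z = 0} measured in the l∞-norm equals |min{a,b}|. -/
/-!
Shifting `(a, b)` diagonally by `m = min a b` lands in `Ω`, at l∞-distance exactly `|m|`.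
Conversely, for `(y, z) ∈ Ω` both `a ≥ a - y` and `b ≥ b - z` are at least `-‖(a, b) - (y, z)‖`,
while the vanishing coordinate, say `y = 0`, gives `min a b ≤ a - y ≤ ‖(a, b) - (y, z)‖`.
-/

def complementaritySet : Set (ℝ × ℝ) := {p | 0 ≤ p.1 ∧ 0 ≤ p.2 ∧ p.1 * p.2 = 0}

lemma abs_min_le_max_abs_sub {α : Type*} [AddCommGroup α] [LinearOrder α] [IsOrderedAddMonoid α]
    {a b y z : α} (hy : 0 ≤ y) (hz : 0 ≤ z) (hyz : y = 0 ∨ z = 0) :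
    |min a b| ≤ max |a - y| |b - z| := by
  refine abs_le.mpr ⟨le_min ?_ ?_, ?_⟩
  · calc -max |a - y| |b - z| ≤ -|a - y| := neg_le_neg (le_max_left _ _)
      _ ≤ a - y := neg_abs_le _
      _ ≤ a := sub_le_self a hy
  · calc -max |a - y| |b - z| ≤ -|b - z| := neg_le_neg (le_max_right _ _)
      _ ≤ b - z := neg_abs_le _
      _ ≤ b := sub_le_self b hz
  · rcases hyz with rfl | rfl
    · calc min a b ≤ a - 0 := by rw [sub_zero]; exact min_le_left a b
        _ ≤ |a - 0| := le_abs_self _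
        _ ≤ _ := le_max_left _ _
    · calc min a b ≤ b - 0 := by rw [sub_zero]; exact min_le_right a b
        _ ≤ |b - 0| := le_abs_self _
        _ ≤ _ := le_max_right _ _

lemma sub_min_mem_complementaritySet (a b : ℝ) :
    (a - min a b, b - min a b) ∈ complementaritySet := by
  refine ⟨sub_nonneg.mpr (min_le_left a b), sub_nonneg.mpr (min_le_right a b), ?_⟩
  rcases le_total a b with hab | hab
  · simp [min_eq_left hab]
  · simp [min_eq_right hab]

lemma abs_min_le_dist_of_mem_complementaritySet {a b : ℝ} {p : ℝ × ℝ}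
    (hp : p ∈ complementaritySet) : |min a b| ≤ dist (a, b) p := by
  obtain ⟨hy, hz, hyz⟩ := hp
  rw [Prod.dist_eq, Real.dist_eq, Real.dist_eq]
  exact abs_min_le_max_abs_sub hy hz (mul_eq_zero.mp hyz)

/-- The distance (in the l∞ norm, which is the product metric on `ℝ × ℝ`) from a point
`(a,b)` to the complementarity set `Ω = {(y,z) : 0 ≤ y ⊥ z ≥ 0}` equals `|min a b|`. -/
theorem stmt1 (a b : ℝ) :
    Metric.infDist (a, b)
      {p : ℝ × ℝ | 0 ≤ p.1 ∧ 0 ≤ p.2 ∧ p.1 * p.2 = 0} = |min a b| := by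
  change Metric.infDist (a, b) complementaritySet = |min a b|
  refine le_antisymm ?_ ?_
  · calc Metric.infDist (a, b) complementaritySet
          ≤ dist (a, b) (a - min a b, b - min a b) :=
            Metric.infDist_le_dist_of_mem (sub_min_mem_complementaritySet a b)
      _ = |min a b| := by simp [Prod.dist_eq]
  · exact (Metric.le_infDist ⟨_, sub_min_mem_complementaritySet a b⟩).mpr
      fun _ hp => abs_min_le_dist_of_mem_complementaritySet hp
end

section
/- For any (a,b) ∈ ℝ², the distance from (a,b) to the set Ω := {(y,z) ∈ ℝ² : y ≥ 0, z ≥ 0, y·z = 0} measured in the l1-norm equals max{−a, −b, −(a+b), min{a,b}}. -/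
/-!
Every term of `max{-a, -b, -(a+b), min{a,b}}` is a lower bound for `|a - y| + |b - z|` on `Ω`:
the first three because `y, z ≥ 0`, the last because `y = 0` or `z = 0`. If `b ≤ a`, the point
`(max a 0, 0) ∈ Ω` attains the bound; the case `a ≤ b` is symmetric.
-/

namespace Complementarity

lemma max_neg_min_le_abs_sub_add_abs_sub {a b y z : ℝ} (hy : 0 ≤ y) (hz : 0 ≤ z)
    (hyz : y * z = 0) :
    max (max (-a) (-b)) (max (-(a + b)) (min a b)) ≤ |a - y| + |b - z| := by
  have hay : y - a ≤ |a - y| := abs_sub_comm a y ▸ le_abs_self _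
  have hbz : z - b ≤ |b - z| := abs_sub_comm b z ▸ le_abs_self _
  have hmin : min a b ≤ |a - y| + |b - z| := by
    rcases mul_eq_zero.mp hyz with rfl | rfl <;> rw [sub_zero]
    · linarith [min_le_left a b, le_abs_self a, abs_nonneg (b - z)]
    · linarith [min_le_right a b, le_abs_self b, abs_nonneg (a - y)]
  simp only [max_le_iff]
  exact ⟨⟨by linarith [abs_nonneg (b - z)], by linarith [abs_nonneg (a - y)]⟩, by linarith, hmin⟩

lemma abs_sub_max_zero_add_abs_le_of_le {a b : ℝ} (hba : b ≤ a) :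
    |a - max a 0| + |b| ≤ max (max (-a) (-b)) (max (-(a + b)) (min a b)) := by
  rcases le_total 0 a with ha | ha
  · rw [max_eq_left ha, sub_self, abs_zero, zero_add]
    rcases le_total 0 b with hb | hb
    · rw [abs_of_nonneg hb]
      exact le_max_of_le_right (le_max_of_le_right (le_min hba le_rfl))
    · rw [abs_of_nonpos hb]
      exact le_max_of_le_left (le_max_right _ _)
  · rw [max_eq_right ha, sub_zero, abs_of_nonpos ha, abs_of_nonpos (hba.trans ha)]
    exact le_max_of_le_right (le_max_of_le_left (by linarith))

lemma exists_abs_sub_add_abs_sub_le (a b : ℝ) :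
    ∃ y z : ℝ, 0 ≤ y ∧ 0 ≤ z ∧ y * z = 0 ∧
      |a - y| + |b - z| ≤ max (max (-a) (-b)) (max (-(a + b)) (min a b)) := by
  rcases le_total b a with hba | hab
  · refine ⟨max a 0, 0, le_max_right a 0, le_rfl, mul_zero _, ?_⟩
    simpa only [sub_zero] using abs_sub_max_zero_add_abs_le_of_le hba
  · refine ⟨0, max b 0, le_rfl, le_max_right b 0, zero_mul _, ?_⟩
    have h := abs_sub_max_zero_add_abs_le_of_le hab
    rw [add_comm b a, max_comm (-b), min_comm, add_comm] at h
    simpa only [sub_zero] using h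

end Complementarity

open Complementarity in
/-- The distance in the l1 norm from `(a,b)` to the complementarity set
`Ω = {(y,z) : 0 ≤ y ⊥ z ≥ 0}` equals `max{-a, -b, -(a+b), min{a,b}}`. -/
theorem stmt2 (a b : ℝ) :
    sInf {r : ℝ | ∃ y z : ℝ, 0 ≤ y ∧ 0 ≤ z ∧ y * z = 0 ∧ r = |a - y| + |b - z|} =
      max (max (-a) (-b)) (max (-(a + b)) (min a b)) := by
  refine IsLeast.csInf_eq ⟨?_, ?_⟩
  · obtain ⟨y, z, hy, hz, hyz, hle⟩ := exists_abs_sub_add_abs_sub_le a b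
    exact ⟨y, z, hy, hz, hyz,
      le_antisymm (max_neg_min_le_abs_sub_add_abs_sub hy hz hyz) hle⟩
  · rintro r ⟨y, z, hy, hz, hyz, rfl⟩
    exact max_neg_min_le_abs_sub_add_abs_sub hy hz hyz
end

section
/- Let h_i : ℝ^d → ℝ (i = 1,...,m), G_i, H_i : ℝ^d → ℝ (i in finite index sets I* and K* respectively) be continuously differentiable at a feasible point x* of the system h(x) = 0, G_i(x) = 0 (i ∈ I*), H_i(x) = 0 (i ∈ K*), x ∈ C with C ⊆ ℝ^d closed. If the rank of the collection {∇h_i(x*)}_{i=1}^m ∪ {∇G_i(x*)}_{i ∈ I*} ∪ {∇H_i(x*)}_{i ∈ K*} equals d (i.e., these gradients span ℝ^d), then there exist α > 0 and ε > 0 such that for all x ∈ B_ε(x*) ∩ C, the distance from x to the feasible set F is at most α(‖h(x)‖ + Σ_{i∈I*}|G_i(x)| + Σ_{i∈K*}|H_i(x)|). -/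
/-! Full rank of the constraint gradients at `x*` says exactly that the derivative at `x*` of the
residual map `x ↦ (h(x), G_{I*}(x), H_{K*}(x))` is injective, hence antilipschitz, so
`‖x - x*‖ = O(‖residual(x)‖)` near `x*`. As `x* ∈ F`, the distance from `x` to `F` is at most
`‖x - x*‖`: near `x*` the feasible set is just `{x*}`. -/

open Set Filter Topology Asymptotics

section

variable {𝕜 E F : Type*} [NontriviallyNormedField 𝕜] [NormedAddCommGroup E] [NormedSpace 𝕜 E]
  [NormedAddCommGroup F] [NormedSpace 𝕜 F] {f : E → F} {f' : E →L[𝕜] F} {x₀ : E}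

theorem HasFDerivAt.isBigO_sub_rev_of_antilipschitz (hf : HasFDerivAt f f' x₀) {K : NNReal}
    (hK : AntilipschitzWith K f') : (fun x => x - x₀) =O[𝓝 x₀] fun x => f x - f x₀ := by
  have hlin : (fun x => x - x₀) =O[𝓝 x₀] fun x => f' (x - x₀) :=
    isBigO_iff.2 ⟨K, Eventually.of_forall fun x => by simpa using hK.le_mul_dist (x - x₀) 0⟩
  have hequiv : (fun x => f x - f x₀) ~[𝓝 x₀] fun x => f' (x - x₀) :=
    hf.isLittleO.trans_isBigO hlin
  exact hlin.trans hequiv.isBigO_symm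

theorem HasFDerivAt.exists_pos_forall_ball_norm_sub_le [CompleteSpace 𝕜] [FiniteDimensional 𝕜 E]
    (hf : HasFDerivAt f f' x₀) (hinj : Function.Injective f') :
    ∃ c > 0, ∃ ε > 0, ∀ x ∈ Metric.ball x₀ ε, ‖x - x₀‖ ≤ c * ‖f x - f x₀‖ := by
  obtain ⟨K, -, hK⟩ := LinearMap.exists_antilipschitzWith f'.toLinearMap
    (LinearMap.ker_eq_bot.2 hinj)
  obtain ⟨c, hc, hbound⟩ := (hf.isBigO_sub_rev_of_antilipschitz hK).exists_pos
  obtain ⟨ε, hε, hball⟩ := Metric.eventually_nhds_iff_ball.1 hbound.bound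
  exact ⟨c, hc, ε, hε, hball⟩

end

theorem Pi.norm_le_sum_norm {ι : Type*} [Fintype ι] {E : ι → Type*}
    [∀ i, SeminormedAddCommGroup (E i)] (x : ∀ i, E i) : ‖x‖ ≤ ∑ i, ‖x i‖ :=
  (pi_norm_le_iff_of_nonneg (by positivity)).2 fun i =>
    Finset.single_le_sum (fun j _ => norm_nonneg (x j)) (Finset.mem_univ i)

section

variable {E ι : Type*} [NormedAddCommGroup E] [InnerProductSpace ℝ E] [CompleteSpace E]
  {g : ι → E → ℝ} {x₀ : E}

theorem injective_pi_fderiv_of_span_gradient_eq_top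
    (hspan : Submodule.span ℝ (range fun i => gradient (g i) x₀) = ⊤) :
    Function.Injective (ContinuousLinearMap.pi fun i => fderiv ℝ (g i) x₀) := by
  refine (injective_iff_map_eq_zero _).2 fun v hv => ?_
  have hperp : Submodule.span ℝ (range fun i => gradient (g i) x₀) ≤ (ℝ ∙ v)ᗮ := by
    rw [Submodule.span_le]
    rintro _ ⟨i, rfl⟩
    rw [SetLike.mem_coe, Submodule.mem_orthogonal_singleton_iff_inner_left, inner_gradient_left]
    exact congrFun hv i
  rwa [hspan, top_le_iff, Submodule.orthogonal_eq_top_iff, Submodule.span_singleton_eq_bot] at hperp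

variable [Fintype ι] [FiniteDimensional ℝ E]

theorem exists_norm_sub_le_mul_sum_abs_of_span_gradient_eq_top
    (hg : ∀ i, DifferentiableAt ℝ (g i) x₀) (hzero : ∀ i, g i x₀ = 0)
    (hspan : Submodule.span ℝ (range fun i => gradient (g i) x₀) = ⊤) :
    ∃ α > 0, ∃ ε > 0, ∀ x ∈ Metric.ball x₀ ε, ‖x - x₀‖ ≤ α * ∑ i, |g i x| := by
  have hf : HasFDerivAt (fun x i => g i x) (ContinuousLinearMap.pi fun i => fderiv ℝ (g i) x₀) x₀ :=
    hasFDerivAt_pi.2 fun i => (hg i).hasFDerivAt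
  obtain ⟨α, hα, ε, hε, hbound⟩ :=
    hf.exists_pos_forall_ball_norm_sub_le (injective_pi_fderiv_of_span_gradient_eq_top hspan)
  refine ⟨α, hα, ε, hε, fun x hx => (hbound x hx).trans ?_⟩
  gcongr
  calc ‖(fun i => g i x) - fun i => g i x₀‖ = ‖fun i => g i x‖ := by
        rw [show (fun i => g i x₀) = 0 from funext hzero, sub_zero]
    _ ≤ ∑ i, ‖g i x‖ := Pi.norm_le_sum_norm _
    _ = ∑ i, |g i x| := by simp only [Real.norm_eq_abs]

end

theorem stmt4_general {d m a b : ℕ}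
    (h : Fin m → EuclideanSpace ℝ (Fin d) → ℝ)
    (G : Fin a → EuclideanSpace ℝ (Fin d) → ℝ)
    (H : Fin b → EuclideanSpace ℝ (Fin d) → ℝ)
    (C : Set (EuclideanSpace ℝ (Fin d)))
    (xs : EuclideanSpace ℝ (Fin d))
    (hh : ∀ i, ContDiffAt ℝ 1 (h i) xs)
    (hG : ∀ i, ContDiffAt ℝ 1 (G i) xs)
    (hH : ∀ i, ContDiffAt ℝ 1 (H i) xs)
    (F : Set (EuclideanSpace ℝ (Fin d)))
    (hF : F = {x ∈ C | (∀ i, h i x = 0) ∧ (∀ i, G i x = 0) ∧ (∀ i, H i x = 0)})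
    (hfeas : xs ∈ F)
    (hrank : Submodule.span ℝ
        ((Set.range fun i => gradient (h i) xs) ∪ (Set.range fun i => gradient (G i) xs) ∪
          (Set.range fun i => gradient (H i) xs)) = ⊤) :
    ∃ α > (0 : ℝ), ∃ ε > (0 : ℝ), ∀ x ∈ Metric.ball xs ε ∩ C,
      Metric.infDist x F ≤
        α * ((∑ i, |h i x|) + (∑ i, |G i x|) + (∑ i, |H i x|)) := by
  obtain ⟨-, hh0, hG0, hH0⟩ := hF ▸ hfeas
  have hspan : Submodule.span ℝ
      (range fun i => gradient (Sum.elim h (Sum.elim G H) i) xs) = ⊤ := by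
    have hrange : (range fun i => gradient (Sum.elim h (Sum.elim G H) i) xs) =
        range (Sum.elim (fun i => gradient (h i) xs)
          (Sum.elim (fun i => gradient (G i) xs) fun i => gradient (H i) xs)) := by
      congr 1
      ext (i | i | i) : 1 <;> rfl
    rwa [hrange, Sum.elim_range, Sum.elim_range, ← union_assoc]
  obtain ⟨α, hα, ε, hε, hbound⟩ :=
    exists_norm_sub_le_mul_sum_abs_of_span_gradient_eq_top (g := Sum.elim h (Sum.elim G H))
      (by rintro (i | i | i)
          exacts [(hh i).differentiableAt one_ne_zero, (hG i).differentiableAt one_ne_zero,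
            (hH i).differentiableAt one_ne_zero])
      (by rintro (i | i | i); exacts [hh0 i, hG0 i, hH0 i]) hspan
  refine ⟨α, hα, ε, hε, fun x hx => ?_⟩
  calc Metric.infDist x F ≤ dist x xs := Metric.infDist_le_dist_of_mem hfeas
    _ = ‖x - xs‖ := dist_eq_norm _ _
    _ ≤ α * ∑ i, |Sum.elim h (Sum.elim G H) i x| := hbound x hx.1
    _ = _ := by simp [Fintype.sum_sum_type, add_assoc]

/-- If the gradients of the equality constraints `h_i`, `G_i (i ∈ I*)`, `H_i (i ∈ K*)`
span `ℝ^d` at a feasible point `x*` of the system `h(x)=0, G_{I*}(x)=0, H_{K*}(x)=0, x ∈ C`,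
then a local error bound holds: the distance to the feasible set is bounded by a multiple of
the residual `‖h(x)‖ + Σ_{i∈I*}|G_i(x)| + Σ_{i∈K*}|H_i(x)|` for `x` near `x*` in `C`. -/
theorem stmt4 {d m a b : ℕ}
    (h : Fin m → EuclideanSpace ℝ (Fin d) → ℝ)
    (G : Fin a → EuclideanSpace ℝ (Fin d) → ℝ)
    (H : Fin b → EuclideanSpace ℝ (Fin d) → ℝ)
    (C : Set (EuclideanSpace ℝ (Fin d))) (hC : IsClosed C)
    (xs : EuclideanSpace ℝ (Fin d))
    (hh : ∀ i, ContDiffAt ℝ 1 (h i) xs)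
    (hG : ∀ i, ContDiffAt ℝ 1 (G i) xs)
    (hH : ∀ i, ContDiffAt ℝ 1 (H i) xs)
    (F : Set (EuclideanSpace ℝ (Fin d)))
    (hF : F = {x ∈ C | (∀ i, h i x = 0) ∧ (∀ i, G i x = 0) ∧ (∀ i, H i x = 0)})
    (hfeas : xs ∈ F)
    (hrank : Submodule.span ℝ
        ((Set.range fun i => gradient (h i) xs) ∪ (Set.range fun i => gradient (G i) xs) ∪
          (Set.range fun i => gradient (H i) xs)) = ⊤) :
    ∃ α > (0 : ℝ), ∃ ε > (0 : ℝ), ∀ x ∈ Metric.ball xs ε ∩ C,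
      Metric.infDist x F ≤
        α * ((∑ i, |h i x|) + (∑ i, |G i x|) + (∑ i, |H i x|)) :=
  stmt4_general h G H C xs hh hG hH F hF hfeas hrank
end
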